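/- arXiv:2502.12844 — 3 statements merged into one kernel-verified Lean document; each statement's English description precedes it below -/
import Mathlib

section
/- The number of necklaces of length n over a k-letter alphabet equals (1/n) · Σ_{d | n} φ(n/d) · k^d, where φ is Euler's totient function. -/
/-- Cyclic rotation equivalence on words of length `n` over a `k`-letter alphabet. -/
def rotSetoid (k n : ℕ) : Setoid (Fin n → Fin k) where
  r w w' := ∃ j : ℤ, w' = w ∘ ⇑((finRotate n) ^ j)
  iseqv := by
    refine ⟨fun w => ⟨0, by simp⟩, ?_, ?_⟩
    · rintro w w' ⟨j, rfl⟩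
      exact ⟨-j, by ext i; simp only [Function.comp_apply]; rw [← Equiv.Perm.mul_apply, ← zpow_add, add_neg_cancel, zpow_zero, Equiv.Perm.one_apply]⟩
    · rintro w w' w'' ⟨j, rfl⟩ ⟨j', rfl⟩
      exact ⟨j + j', by ext i; simp [Function.comp, ← Equiv.Perm.mul_apply, ← zpow_add]⟩

/-!
Identifying `Fin n` with `ZMod n` turns rotation of words into translation, so necklaces are the
orbits of `ZMod n` acting on words `ZMod n → Fin k` by translation. By Burnside's lemma, `n` times
the number of orbits is the sum over `c : ZMod n` of the number of words fixed by translation by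
`c`. These are the `c`-periodic words, i.e. the functions on `ZMod n ⧸ ⟨c⟩`, a group of order
`gcd n c`; so the fixed words number `k ^ gcd n c`. Finally, exactly `φ (n / d)` residues `c`
have `gcd n c = d`.
-/

open Function Finset AddAction

section Periodic

variable {G Y : Type*} [AddGroup G]

def Function.periodicEquivFunQuotient (c : G) :
    {f : G → Y // Periodic f c} ≃ (G ⧸ AddSubgroup.zmultiples c → Y) where
  toFun f := f.2.lift
  invFun g := ⟨g ∘ (↑), fun x => congrArg g <| QuotientAddGroup.eq.2 <| by simp⟩
  left_inv _ := rfl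
  right_inv g := funext fun x => Quotient.inductionOn' x fun _ => rfl

theorem Function.card_periodic (c : G) [(AddSubgroup.zmultiples c).FiniteIndex] :
    Nat.card {f : G → Y // Periodic f c} = Nat.card Y ^ (AddSubgroup.zmultiples c).index := by
  rw [Nat.card_congr (periodicEquivFunQuotient c), Nat.card_fun, AddSubgroup.index]

end Periodic

theorem DomAddAct.mk_vadd_eq_self_iff_periodic {G Y : Type*} [AddCommGroup G] {c : G}
    {f : G → Y} : DomAddAct.mk c +ᵥ f = f ↔ Periodic f c := by
  simp only [funext_iff, DomAddAct.vadd_apply, Equiv.symm_apply_apply, vadd_eq_add, add_comm c,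
    Periodic]

theorem DomAddAct.card_mul_card_orbits_fun_eq_sum_pow_index (G Y : Type*) [AddCommGroup G] [Fintype G]
    [Finite Y] : Nat.card G * Nat.card (orbitRel.Quotient Gᵈᵃᵃ (G → Y)) =
      ∑ c : G, Nat.card Y ^ (AddSubgroup.zmultiples c).index := by
  classical
  let _ : Fintype Gᵈᵃᵃ := Fintype.ofEquiv G DomAddAct.mk
  let _ : Fintype (orbitRel.Quotient Gᵈᵃᵃ (G → Y)) := Fintype.ofFinite _
  let _ (a : Gᵈᵃᵃ) : Fintype (fixedBy (G → Y) a) := Fintype.ofFinite _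
  have burnside := sum_card_fixedBy_eq_card_orbits_mul_card_addGroup Gᵈᵃᵃ (G → Y)
  rw [← DomAddAct.mk.sum_comp, Fintype.card_congr DomAddAct.mk.symm] at burnside
  rw [mul_comm, Nat.card_eq_fintype_card, Nat.card_eq_fintype_card, ← burnside]
  refine Fintype.sum_congr _ _ fun c => ?_
  rw [← Nat.card_eq_fintype_card, ← card_periodic]
  exact Nat.card_congr (Equiv.subtypeEquivRight fun f => DomAddAct.mk_vadd_eq_self_iff_periodic)

theorem ZMod.index_zmultiples_eq_gcd {n : ℕ} [NeZero n] (c : ZMod n) :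
    (AddSubgroup.zmultiples c).index = n.gcd c.val := by
  have hord : addOrderOf c = n / n.gcd c.val := by
    rw [← ZMod.addOrderOf_coe _ (NeZero.ne n), ZMod.natCast_zmod_val]
  have h := (AddSubgroup.zmultiples c).index_mul_card
  rw [Nat.card_zmultiples, Nat.card_zmod] at h
  rw [Nat.eq_div_of_mul_eq_left (addOrderOf_pos c).ne' h, hord,
    Nat.div_div_self (Nat.gcd_dvd_left n c.val) (NeZero.ne n)]

theorem ZMod.sum_comp_val {M : Type*} [AddCommMonoid M] (n : ℕ) [NeZero n] (f : ℕ → M) :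
    ∑ c : ZMod n, f c.val = ∑ t ∈ range n, f t := by
  refine sum_nbij ZMod.val (fun c _ => mem_range.2 (ZMod.val_lt c))
    (fun a _ b _ h => ZMod.val_injective n h) (fun t ht => ?_) fun _ _ => rfl
  exact ⟨t, mem_univ _, ZMod.val_cast_of_lt (mem_range.1 ht)⟩

theorem Nat.sum_range_comp_gcd {M : Type*} [AddCommMonoid M] (n : ℕ) (f : ℕ → M) :
    ∑ t ∈ range n, f (n.gcd t) = ∑ d ∈ n.divisors, Nat.totient (n / d) • f d := by
  rcases n.eq_zero_or_pos with rfl | hn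
  · simp
  rw [← sum_fiberwise_of_maps_to fun t _ => Nat.mem_divisors.2 ⟨n.gcd_dvd_left t, hn.ne'⟩]
  refine sum_congr rfl fun d hd => ?_
  rw [totient_div_of_dvd (Nat.dvd_of_mem_divisors hd), ← sum_const]
  exact sum_congr rfl fun t ht => by rw [(mem_filter.1 ht).2]

theorem finRotate_zpow_apply (n : ℕ) [NeZero n] (j : ℤ) (i : Fin n) :
    (finRotate n ^ j) i = (ZMod.finEquiv n).symm (ZMod.finEquiv n i + j) := by
  have hrot : finRotate n = (ZMod.finEquiv n).symm.toEquiv.permCongrHom (Equiv.addRight 1) :=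
    Equiv.ext fun i => by simp [Equiv.permCongr_apply, finRotate_apply]
  rw [hrot, ← map_zpow, Equiv.zsmul_addRight, zsmul_one]
  simp [Equiv.permCongr_apply, add_comm]

def rotSetoidQuotientEquiv (k n : ℕ) [NeZero n] :
    Quotient (rotSetoid k n) ≃ orbitRel.Quotient (ZMod n)ᵈᵃᵃ (ZMod n → Fin k) :=
  let E := (ZMod.finEquiv n).toEquiv.arrowCongr (Equiv.refl (Fin k))
  Quotient.congr E fun w w' => by
    rw [Setoid.comm', orbitRel_apply, mem_orbit_iff, DomAddAct.mk.surjective.exists,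
      ZMod.intCast_surjective.exists]
    refine exists_congr fun j => ?_
    have hrot : DomAddAct.mk (j : ZMod n) +ᵥ E w' = E (w' ∘ ⇑(finRotate n ^ j)) :=
      funext fun x => by simp [E, DomAddAct.vadd_apply, finRotate_zpow_apply, add_comm]
    rw [hrot, E.apply_eq_iff_eq, eq_comm]

/-- The number of necklaces of length `n` over a `k`-letter alphabet equals
`(1/n) · Σ_{d ∣ n} φ(n/d) · k^d`. -/
theorem stmt1 (k n : ℕ) (hn : 0 < n) :
    n * Nat.card (Quotient (rotSetoid k n)) =
      ∑ d ∈ n.divisors, Nat.totient (n / d) * k ^ d := by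
  have : NeZero n := ⟨hn.ne'⟩
  have burnside := DomAddAct.card_mul_card_orbits_fun_eq_sum_pow_index (ZMod n) (Fin k)
  simp only [Nat.card_zmod, Nat.card_fin, ZMod.index_zmultiples_eq_gcd] at burnside
  rw [Nat.card_congr (rotSetoidQuotientEquiv k n), burnside,
    ZMod.sum_comp_val n (fun t => k ^ n.gcd t), Nat.sum_range_comp_gcd]
  simp only [smul_eq_mul]
end

section
/- For c ≥ 1, a word u = u_1 u_2 ⋯ u_n is the Burrows–Wheeler transform of an aperiodic necklace [w] if and only if the word u_1^c u_2^c ⋯ u_n^c (each letter repeated c times) is the Burrows–Wheeler transform of the necklace [w^c]. -/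
/-!
Write `x ^ c` for `(replicate c x).flatten`. If `|x| = |y|` and `x ≤ y` then `x ^ c ≤ y ^ c`
(the first block already decides a strict comparison), and rotating `w ^ c` by `i` gives
`(w.rotate i) ^ c`, which only depends on `i mod |w|`. So the sorted list of the `c |w|`
rotations of `w ^ c` is obtained from the sorted rotations `x₁ ≤ ⋯ ≤ x_n` of `w` by replacing
each `xⱼ` by `c` copies of `xⱼ ^ c`; since `xⱼ ^ c` ends with the last letter of `xⱼ`, the BWT
of `w ^ c` repeats each letter of the BWT of `w` `c` times, and this letter-repetition map is
injective.
-/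

/-- The Burrows–Wheeler transform of a word `w`: the list of last letters of the
rotations of `w` (listed with multiplicity) sorted in ascending lexicographic order. -/
def bwt {k : ℕ} (w : List (Fin k)) : List (Fin k) :=
  (List.insertionSort (· ≤ ·) ((List.range w.length).map (fun i => w.rotate i))).filterMap
    List.getLast?

/-- `w` is a primitive (non-power) nonempty word. -/
def Primitive {k : ℕ} (w : List (Fin k)) : Prop :=
  w ≠ [] ∧ ∀ (v : List (Fin k)) (m : ℕ), w = (List.replicate m v).flatten → m = 1

namespace List

variable {α β : Type*}

theorem Lex.append_of_length_eq {r : α → α → Prop} {s t : List α} (h : Lex r s t)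
    (hl : s.length = t.length) (p q : List α) : Lex r (s ++ p) (t ++ q) := by
  induction h with
  | nil => simp at hl
  | cons _ ih => exact .cons (ih (by simpa using hl))
  | rel hab => exact .rel hab

theorem flatten_replicate_le_flatten_replicate [LinearOrder α] {x y : List α}
    (hl : x.length = y.length) (h : x ≤ y) (c : ℕ) :
    (replicate c x).flatten ≤ (replicate c y).flatten := by
  rcases h.lt_or_eq with h | rfl
  · cases c with
    | zero => exact le_rfl
    | succ c => exact le_of_lt (Lex.append_of_length_eq h hl _ _)
  · exact le_rfl

theorem flatten_replicate_append_eq_append_flatten_replicate (a b : List α) (c : ℕ) :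
    (replicate c (a ++ b)).flatten ++ a = a ++ (replicate c (b ++ a)).flatten := by
  induction c with
  | zero => simp
  | succ c ih => simp [replicate_succ, ← ih]

theorem rotate_flatten_replicate_append (a b : List α) (c : ℕ) :
    (replicate c (a ++ b)).flatten.rotate a.length = (replicate c (b ++ a)).flatten := by
  cases c with
  | zero => simp
  | succ c =>
    rw [replicate_succ, flatten_cons, append_assoc, rotate_append_length_eq,
      append_assoc, flatten_replicate_append_eq_append_flatten_replicate, ← append_assoc,
      ← flatten_cons, ← replicate_succ]

theorem rotate_flatten_replicate {w : List α} {i : ℕ} (hi : i ≤ w.length) (c : ℕ) :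
    (replicate c w).flatten.rotate i = (replicate c (w.rotate i)).flatten := by
  have := rotate_flatten_replicate_append (w.take i) (w.drop i) c
  rwa [take_append_drop, length_take_of_le hi, ← rotate_eq_drop_append_take hi] at this

theorem periodic_rotate_flatten_replicate (w : List α) (c : ℕ) :
    Function.Periodic (replicate c w).flatten.rotate w.length := fun i => by
  rw [add_comm, ← rotate_rotate, rotate_flatten_replicate le_rfl, rotate_length]

theorem map_range_mul_of_periodic {f : ℕ → β} {n : ℕ} (hf : Function.Periodic f n) (m : ℕ) :
    (range (m * n)).map f = (replicate m ((range n).map f)).flatten := by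
  induction m with
  | zero => simp
  | succ m ih =>
    have hshift : f ∘ (m * n + ·) = f := funext fun i => by
      simpa [add_comm] using hf.nat_mul m i
    rw [Nat.succ_mul, range_add, map_append, ih, map_map, hshift, replicate_succ',
      flatten_append, flatten_singleton]

theorem flatten_replicate_perm_flatMap_replicate (c : ℕ) (l : List α) :
    (replicate c l).flatten ~ l.flatMap (replicate c) := by
  classical
  refine perm_iff_count.2 fun a => ?_
  have hsingle : count a ∘ replicate c = fun x => c * (count a ∘ fun y => [y]) x :=
    funext fun x => by by_cases h : x = a <;> simp [count_replicate, h]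
  rw [count_flatten, count_flatMap, map_replicate, sum_replicate, hsingle, sum_map_mul_left,
    ← count_flatMap, flatMap_singleton', smul_eq_mul]

theorem Pairwise.flatMap_replicate {r : α → α → Prop} (hr : ∀ a, r a a) {l : List α}
    (h : Pairwise r l) (c : ℕ) : Pairwise r (l.flatMap (replicate c)) := by
  refine pairwise_flatMap.2 ⟨fun a _ => pairwise_replicate.2 (.inr (hr a)), h.imp ?_⟩
  intro a b hab x hx y hy
  rwa [eq_of_mem_replicate hx, eq_of_mem_replicate hy]

theorem filterMap_flatMap_replicate (f : α → Option β) (l : List α) (c : ℕ) :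
    (l.flatMap (replicate c)).filterMap f = (l.filterMap f).flatMap (replicate c) := by
  induction l with
  | nil => rfl
  | cons a l ih => cases h : f a <;> simp [h, ih]

theorem flatMap_replicate_injective {c : ℕ} (hc : c ≠ 0) :
    Function.Injective fun l : List α => l.flatMap (replicate c) := by
  obtain ⟨c, rfl⟩ := Nat.exists_eq_succ_of_ne_zero hc
  intro u v h
  induction u generalizing v with
  | nil => cases v <;> simp_all [replicate_succ]
  | cons a u ih =>
    cases v with
    | nil => simp [replicate_succ] at h
    | cons b v =>
      simp only [flatMap_cons, replicate_succ, cons_append, cons.injEq] at h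
      obtain ⟨rfl, h⟩ := h
      rw [ih (append_cancel_left h)]

end List

open List

section Rotations

variable {α : Type*}

def rotations (w : List α) : List (List α) :=
  (range w.length).map w.rotate

theorem length_of_mem_rotations {w x : List α} (hx : x ∈ rotations w) :
    x.length = w.length := by
  obtain ⟨i, -, rfl⟩ := mem_map.1 hx
  exact length_rotate w i

theorem rotations_flatten_replicate (w : List α) (c : ℕ) :
    rotations (replicate c w).flatten
      ~ ((rotations w).map fun x => (replicate c x).flatten).flatMap (replicate c) := by
  have hlen : ((replicate c w).flatten).length = c * w.length := by simp
  have hblock : (rotations w).map (fun x => (replicate c x).flatten)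
      = (range w.length).map (replicate c w).flatten.rotate := by
    rw [rotations, map_map]
    exact map_congr_left fun i hi => (rotate_flatten_replicate (mem_range.1 hi).le c).symm
  rw [rotations, hlen, map_range_mul_of_periodic (periodic_rotate_flatten_replicate w c),
    ← hblock]
  exact flatten_replicate_perm_flatMap_replicate c _

theorem insertionSort_rotations_flatten_replicate [LinearOrder α] (w : List α) (c : ℕ) :
    insertionSort (· ≤ ·) (rotations (replicate c w).flatten)
      = ((insertionSort (· ≤ ·) (rotations w)).map
          fun x => (replicate c x).flatten).flatMap (replicate c) := by
  have hperm := perm_insertionSort (· ≤ ·) (rotations w)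
  refine Perm.eq_of_pairwise' (pairwise_insertionSort _ _) ?_ ?_
  · refine Pairwise.flatMap_replicate le_refl (pairwise_map.2 ?_) c
    refine (pairwise_insertionSort _ _).imp_of_mem fun hx hy hxy => ?_
    exact flatten_replicate_le_flatten_replicate
      ((length_of_mem_rotations (hperm.subset hx)).trans
        (length_of_mem_rotations (hperm.subset hy)).symm) hxy c
  · refine (perm_insertionSort _ _).trans ((rotations_flatten_replicate w c).trans ?_)
    exact ((hperm.map _).flatMap_right _).symm

end Rotations

theorem bwt_eq_filterMap_insertionSort_rotations {k : ℕ} (w : List (Fin k)) :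
    bwt w = (insertionSort (· ≤ ·) (rotations w)).filterMap getLast? :=
  rfl

theorem bwt_flatten_replicate {k c : ℕ} (hc : c ≠ 0) (w : List (Fin k)) :
    bwt (replicate c w).flatten = (bwt w).flatMap (replicate c) := by
  rw [bwt_eq_filterMap_insertionSort_rotations, bwt_eq_filterMap_insertionSort_rotations,
    insertionSort_rotations_flatten_replicate, filterMap_flatMap_replicate, filterMap_map]
  congr 2
  exact funext fun x => getLast?_flatten_replicate hc x

theorem stmt16_general (k c : ℕ) (hc : 1 ≤ c) (w u : List (Fin k)) :
    bwt w = u ↔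
      bwt (List.replicate c w).flatten = u.flatMap (fun a => List.replicate c a) := by
  rw [bwt_flatten_replicate (by omega) w]
  exact (flatMap_replicate_injective (by omega)).eq_iff.symm

/-- For `c ≥ 1`, `u` is the BWT of the aperiodic necklace `[w]` iff the word obtained
from `u` by repeating each letter `c` times is the BWT of `[w^c]`. -/
theorem stmt16 (k c : ℕ) (hc : 1 ≤ c) (w u : List (Fin k)) (hw : Primitive w) :
    bwt w = u ↔
      bwt (List.replicate c w).flatten = u.flatMap (fun a => List.replicate c a) :=
  stmt16_general k c hc w u
end

section
/- A word u over a finite ordered alphabet is the Burrows–Wheeler transform of some aperiodic necklace if and only if the standard permutation of u is a single cycle of length |u|. -/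
open List

namespace List

variable {α : Type*}

theorem exists_eq_flatten_replicate_of_append_comm {A B : List α} (h : A ++ B = B ++ A) :
    ∃ (v : List α) (a b : ℕ), A = (replicate a v).flatten ∧ B = (replicate b v).flatten := by
  induction hn : A.length + B.length using Nat.strong_induction_on generalizing A B with
  | _ n ih =>
    wlog hle : A.length ≤ B.length generalizing A B
    · obtain ⟨v, a, b, hA, hB⟩ := this h.symm (by omega) (by omega)
      exact ⟨v, b, a, hB, hA⟩
    obtain rfl | hA := eq_or_ne A []
    · exact ⟨B, 0, 1, by simp, by simp⟩
    obtain ⟨C, rfl⟩ : A <+: B :=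
      prefix_of_prefix_length_le (h ▸ prefix_append A B) (prefix_append B A) hle
    have hAC : A ++ C = C ++ A := by simpa using h
    obtain ⟨v, a, c, rfl, rfl⟩ := ih _ (by simp [← hn, length_pos_iff.mpr hA]) hAC rfl
    exact ⟨v, a, a + c, rfl, by rw [replicate_add, flatten_append]⟩

theorem rotate_flatten_replicate_length (v : List α) (m : ℕ) :
    (replicate m v).flatten.rotate v.length = (replicate m v).flatten := by
  cases m with
  | zero => simp
  | succ m =>
    conv_lhs => rw [replicate_succ, flatten_cons, rotate_append_length_eq]
    rw [← flatten_concat, ← replicate_succ']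

theorem rotate_finRotate_symm {w : List α} {n : ℕ} (hw : w.length = n) (i : Fin n) :
    w.rotate ((finRotate n).symm i) = (w.rotate i).rotate (n - 1) := by
  obtain ⟨j, rfl⟩ := (finRotate n).surjective i
  obtain _ | m := n
  · exact j.elim0
  rw [Equiv.symm_apply_apply, rotate_rotate, ← rotate_mod w (_ + _), hw, coe_finRotate]
  split_ifs with h
  · simp [h]
  · rw [show (j : ℕ) + 1 + (m + 1 - 1) = j + (m + 1) by omega, Nat.add_mod_right,
      Nat.mod_eq_of_lt j.isLt]

theorem _root_.Function.IsPeriodicPt.rotate_iterate {f : α → α} {x : α} {n : ℕ}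
    (hx : Function.IsPeriodicPt f n x) (m : ℕ) :
    (iterate f x n).rotate m = iterate f (f^[m] x) n := by
  refine ext_getElem (by simp) fun s h₁ h₂ => ?_
  simp only [getElem_rotate, getElem_iterate, length_iterate, hx.iterate_mod_apply,
    ← Function.iterate_add_apply]

variable [LinearOrder α]

theorem append_lt_append_right_iff {l₁ l₂ : List α} (l : List α)
    (h : l₁.length = l₂.length) :
    l₁ ++ l < l₂ ++ l ↔ l₁ < l₂ := by
  induction l₁ generalizing l₂ with
  | nil => obtain rfl := eq_nil_of_length_eq_zero h.symm; simp
  | cons a l₁ ih =>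
    cases l₂ with
    | nil => simp at h
    | cons b l₂ => simp only [cons_append, cons_lt_cons_iff, ih (by simpa using h)]

theorem insertionSort_map_rotate_range {w : List α} {n : ℕ} (hw : w.length = n)
    (T : Equiv.Perm (Fin n)) (hT : StrictMono fun j => w.rotate (T j)) :
    insertionSort (· ≤ ·) ((range w.length).map fun i => w.rotate i) =
      ofFn fun j => w.rotate (T j) := by
  refine Perm.eq_of_sortedLE sortedLE_insertionSort (sortedLE_ofFn_iff.mpr hT.monotone)
    ((perm_insertionSort _ _).trans ?_)
  subst hw
  rw [← map_coe_finRange_eq_range, map_map, ← ofFn_eq_map]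
  exact (T.ofFn_comp_perm fun j => w.rotate j).symm

theorem map_iterate_lt_or_forall_iterate_lt {β : Type*} [LinearOrder β] {f : α → α}
    {F : α → β} (hF : ∀ r r', r < r' → F r < F r' ∨ (F r = F r' ∧ f r < f r'))
    (ℓ : ℕ) {r r' : α} (h : r < r') :
    (iterate f r ℓ).map F < (iterate f r' ℓ).map F ∨ ∀ s ≤ ℓ, f^[s] r < f^[s] r' := by
  induction ℓ generalizing r r' with
  | zero => exact Or.inr fun s hs => by rwa [Nat.le_zero.mp hs]
  | succ ℓ ih =>
    simp only [iterate, map_cons, cons_lt_cons_iff]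
    rcases hF r r' h with hlt | ⟨heq, hf⟩
    · exact Or.inl (Or.inl hlt)
    rcases ih hf with hlt | hall
    · exact Or.inl (Or.inr ⟨heq, hlt⟩)
    · refine Or.inr fun s hs => ?_
      cases s with
      | zero => exact h
      | succ s => exact hall s (by omega)

end List

namespace Equiv.Perm

theorem sameCycle_finRotate {n : ℕ} (x y : Fin n) : (finRotate n).SameCycle x y := by
  have := x.neZero
  refine ⟨((y - x : Fin n) : ℕ), ?_⟩
  rw [zpow_natCast, ← iterate_eq_pow, ← finCycle_eq_finRotate_iterate, finCycle_apply,
    add_sub_cancel]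

theorem minimalPeriod_eq_card_of_forall_sameCycle {α : Type*} [Fintype α] {σ : Perm α} {x : α}
    (hx : ∀ y, σ.SameCycle x y) : Function.minimalPeriod σ x = Fintype.card α := by
  refine le_antisymm Function.minimalPeriod_le_card ?_
  have hpos := Function.minimalPeriod_pos_of_mem_periodicPts (σ.injective.mem_periodicPts x)
  simpa using Fintype.card_le_of_surjective (fun s : Fin (Function.minimalPeriod σ x) => σ^[s] x)
    fun y => by
      obtain ⟨m, rfl⟩ := (hx y).exists_nat_pow_eq
      exact ⟨⟨m % _, Nat.mod_lt _ hpos⟩,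
        by simp [Function.iterate_mod_minimalPeriod_eq, iterate_eq_pow]⟩

variable {n : ℕ} {σ : Perm (Fin n)}

theorem minimalPeriod_eq_of_forall_sameCycle (hσ : ∀ x y, σ.SameCycle x y) (x : Fin n) :
    Function.minimalPeriod σ x = n := by
  simpa using minimalPeriod_eq_card_of_forall_sameCycle (hσ x)

theorem isPeriodicPt_of_forall_sameCycle (hσ : ∀ x y, σ.SameCycle x y) (x : Fin n) :
    Function.IsPeriodicPt σ n x := by
  simpa only [minimalPeriod_eq_of_forall_sameCycle hσ x] using
    Function.isPeriodicPt_minimalPeriod σ x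

theorem strictMono_map_iterate_of_forall_sameCycle (hσ : ∀ x y, σ.SameCycle x y) {α : Type*}
    [LinearOrder α] {F : Fin n → α}
    (hF : ∀ r r', r < r' → F r < F r' ∨ (F r = F r' ∧ σ r < σ r')) :
    StrictMono fun r => (iterate σ r n).map F := by
  intro r r' h
  have := r.neZero
  refine (map_iterate_lt_or_forall_iterate_lt hF n h).resolve_right fun hall => ?_
  obtain ⟨m, hm⟩ := (hσ r' 0).exists_nat_pow_eq
  have := hall (m % n) (Nat.mod_lt _ r.pos).le
  rw [(isPeriodicPt_of_forall_sameCycle hσ r').iterate_mod_apply, iterate_eq_pow σ m, hm] at this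
  exact Fin.not_lt_zero _ this

end Equiv.Perm

theorem primitive_iff_rotate_ne_self {k : ℕ} {w : List (Fin k)} :
    Primitive w ↔ w ≠ [] ∧ ∀ d, 0 < d → d < w.length → w.rotate d ≠ w := by
  refine ⟨fun ⟨hw, hpow⟩ => ⟨hw, fun d hd hdw hrot => ?_⟩,
    fun ⟨hw, hrot⟩ => ⟨hw, fun v m hvm => ?_⟩⟩
  · have hcomm : w.take d ++ w.drop d = w.drop d ++ w.take d := by
      rw [take_append_drop, ← rotate_eq_drop_append_take hdw.le, hrot]
    obtain ⟨v, a, b, hA, hB⟩ := exists_eq_flatten_replicate_of_append_comm hcomm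
    have hab := hpow v (a + b) <| by
      rw [replicate_add, flatten_append, ← hA, ← hB, take_append_drop]
    obtain rfl | rfl : a = 0 ∨ b = 0 := by omega
    · simp [hw] at hA; omega
    · simp at hB; omega
  · have hlen : w.length = m * v.length := by simp [hvm]
    by_contra hm
    obtain rfl | hm2 : m = 0 ∨ 2 ≤ m := by omega
    · simp_all
    have hv : 0 < v.length := by
      refine Nat.pos_of_ne_zero fun hv => hw ?_
      simpa [hv] using hlen
    exact hrot v.length hv (by nlinarith) (hvm ▸ rotate_flatten_replicate_length v m)

theorem Primitive.rotate_injOn {k : ℕ} {w : List (Fin k)} (hw : Primitive w) :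
    Set.InjOn w.rotate (Set.Iio w.length) := by
  have hrot := (primitive_iff_rotate_ne_self.mp hw).2
  suffices ∀ i j, i < j → j < w.length → w.rotate i ≠ w.rotate j by
    intro i hi j hj hij
    by_contra hne
    rcases Nat.lt_or_gt_of_ne hne with h | h
    exacts [this i j h hj hij, this j i h hi hij.symm]
  intro i j hij hj heq
  refine hrot (i + (w.length - j)) (by omega) (by omega) ?_
  rw [← rotate_rotate, heq, rotate_rotate, Nat.add_sub_cancel' hj.le, rotate_length]

theorem Primitive.exists_strictMono_rotate {k n : ℕ} {w : List (Fin k)} (hw : Primitive w)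
    (hn : w.length = n) : ∃ T : Equiv.Perm (Fin n), StrictMono fun j => w.rotate (T j) := by
  set f : Fin n → List (Fin k) := fun j => w.rotate j
  have hf : Function.Injective f := fun i j hij =>
    Fin.ext <| hw.rotate_injOn (by simp [hn]) (by simp [hn]) hij
  exact ⟨Tuple.sort f,
    (Tuple.monotone_sort f).strictMono_of_injective (hf.comp (Tuple.sort f).injective)⟩

theorem bwt_eq_ofFn {k n : ℕ} {w : List (Fin k)} (hw : w.length = n) (T : Equiv.Perm (Fin n))
    (hT : StrictMono fun j => w.rotate (T j)) {L : Fin n → Fin k}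
    (hL : ∀ j, (w.rotate (T j)).getLast? = some (L j)) : bwt w = ofFn L := by
  rw [bwt, insertionSort_map_rotate_range hw T hT, ofFn_eq_map, filterMap_map,
    show getLast? ∘ _ = some ∘ L from funext hL, filterMap_eq_map, ofFn_eq_map]

theorem length_bwt {k : ℕ} (w : List (Fin k)) : (bwt w).length = w.length := by
  rw [bwt, filterMap_length_eq_length.mpr, length_insertionSort, length_map, length_range]
  intro l hl
  obtain ⟨i, hi, rfl⟩ := by simpa [mem_insertionSort] using hl
  simpa [← length_pos_iff] using Nat.zero_lt_of_lt hi

def IsStandardPerm {α : Type*} [LinearOrder α] {n : ℕ} (U : Fin n → α)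
    (π : Equiv.Perm (Fin n)) : Prop :=
  ∀ i j, π i < π j ↔ U i < U j ∨ (U i = U j ∧ i < j)

theorem IsStandardPerm.unique {α : Type*} [LinearOrder α] {n : ℕ} {U : Fin n → α}
    {π σ : Equiv.Perm (Fin n)} (hπ : IsStandardPerm U π) (hσ : IsStandardPerm U σ) :
    π = σ := by
  have hmono : StrictMono fun x => π (σ⁻¹ x) := fun x y hxy =>
    (hπ _ _).mpr <| (hσ _ _).mp (by simpa using hxy)
  exact Equiv.ext fun x => by simpa using hmono.apply_eq (x := σ x)

theorem isStandardPerm_of_sorted_rotations {α : Type*} [LinearOrder α] {n : ℕ} {w : List α}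
    (hw : w.length = n) (T : Equiv.Perm (Fin n)) (hT : StrictMono fun j => w.rotate (T j))
    {L : Fin n → α} (hL : ∀ j, (w.rotate (T j)).getLast? = some (L j)) :
    IsStandardPerm L (T⁻¹ * (finRotate n)⁻¹ * T) := by
  set G := fun j => w.rotate (T j)
  set ρ := T⁻¹ * (finRotate n)⁻¹ * T
  have hsplit :
      ∀ j, ∃ t : List α, G j = t ++ [L j] ∧ G (ρ j) = L j :: t ∧ t.length = n - 1 := by
    intro j
    obtain ⟨t, ht⟩ := getLast?_eq_some_iff.mp (hL j)
    have hlen : t.length = n - 1 := by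
      have := congrArg length ht
      simp only [length_rotate, hw, length_append, length_singleton] at this
      omega
    refine ⟨t, ht, ?_, hlen⟩
    simp only [G, ρ, Equiv.Perm.mul_apply, Equiv.Perm.inv_def, Equiv.apply_symm_apply]
    rw [rotate_finRotate_symm hw, ← hlen]
    exact (congrArg (rotate · t.length) ht).trans (rotate_append_length_eq t [L j])
  intro i j
  obtain ⟨ti, hGi, hρi, hti⟩ := hsplit i
  obtain ⟨tj, hGj, hρj, htj⟩ := hsplit j
  rw [← hT.lt_iff_lt (a := ρ i), ← hT.lt_iff_lt (a := i)]
  change G (ρ i) < G (ρ j) ↔ L i < L j ∨ (L i = L j ∧ G i < G j)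
  rw [hρi, hρj, cons_lt_cons_iff, hGi, hGj]
  refine or_congr_right (and_congr_right fun h => ?_)
  rw [h, append_lt_append_right_iff _ (hti.trans htj.symm)]

theorem Primitive.sameCycle_of_isStandardPerm_bwt {k : ℕ} {w : List (Fin k)} (hw : Primitive w)
    {π : Equiv.Perm (Fin (bwt w).length)} (hπ : IsStandardPerm (bwt w).get π) (i j : Fin _) :
    π.SameCycle i j := by
  have hn := (length_bwt w).symm
  obtain ⟨T, hT⟩ := hw.exists_strictMono_rotate hn
  have hlast : ∀ j : Fin _, ∃ a, (w.rotate (T j)).getLast? = some a := fun j =>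
    Option.isSome_iff_exists.mp (by simpa using hw.1)
  choose L hL using hlast
  have hLu : L = (bwt w).get :=
    ofFn_injective ((bwt_eq_ofFn hn T hT hL).symm.trans (ofFn_get _).symm)
  rw [hLu] at hL
  rw [hπ.unique (isStandardPerm_of_sorted_rotations hn T hT hL)]
  simpa using Equiv.Perm.sameCycle_conj (g := T⁻¹) (f := (finRotate _)⁻¹) |>.mpr
    (Equiv.Perm.sameCycle_inv.mpr (Equiv.Perm.sameCycle_finRotate _ _))

theorem IsStandardPerm.exists_primitive_bwt_eq {k n : ℕ} {U : Fin n → Fin k}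
    {π : Equiv.Perm (Fin n)} (hπ : IsStandardPerm U π) {i₀ : Fin n}
    (hi₀ : ∀ j, π.SameCycle i₀ j) : ∃ w, Primitive w ∧ bwt w = ofFn U := by
  have hσ : ∀ x y, (π⁻¹).SameCycle x y := fun x y =>
    Equiv.Perm.sameCycle_inv.mpr ((hi₀ x).symm.trans (hi₀ y))
  have hπσ : ∀ x, π (π⁻¹ x) = x := fun x => π.apply_symm_apply x
  generalize π⁻¹ = σ at hσ hπσ
  set row : Fin n → List (Fin k) := fun r => (iterate σ r n).map (U ∘ σ)
  have hrow : StrictMono row := Equiv.Perm.strictMono_map_iterate_of_forall_sameCycle hσ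
    fun r r' h => (hπ _ _).mp (by rwa [hπσ, hπσ])
  have hperiod := Equiv.Perm.minimalPeriod_eq_of_forall_sameCycle hσ i₀
  have he : Function.Bijective fun s : Fin n => σ^[s] i₀ :=
    Finite.injective_iff_bijective.mp fun s t hst =>
      Fin.ext (Function.iterate_injOn_Iio_minimalPeriod (by simp [hperiod]) (by simp [hperiod]) hst)
  set T := (Equiv.ofBijective _ he).symm
  have hrot : ∀ m, (row i₀).rotate m = row (σ^[m] i₀) := fun m => by
    simp only [row, ← map_rotate,
      (Equiv.Perm.isPeriodicPt_of_forall_sameCycle hσ i₀).rotate_iterate]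
  have hT : ∀ r, (row i₀).rotate (T r) = row r := fun r => by
    rw [hrot]
    exact congrArg row ((Equiv.ofBijective _ he).apply_symm_apply r)
  have hlen : (row i₀).length = n := by simp [row]
  refine ⟨row i₀, primitive_iff_rotate_ne_self.mpr ⟨?_, fun d hd hdn hd' => ?_⟩,
    bwt_eq_ofFn hlen T (by simpa only [hT] using hrow) fun r => ?_⟩
  · exact ne_nil_of_length_pos (hlen ▸ i₀.pos)
  · rw [hrot] at hd'
    have := Function.iterate_injOn_Iio_minimalPeriod (x₁ := d) (x₂ := 0)
      (by simp [hperiod, ← hlen, hdn]) (by simp [hperiod, i₀.pos]) (hrow.injective hd')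
    omega
  · rw [hT, getLast?_eq_getElem?]
    simp only [row, length_map, length_iterate, getElem?_map,
      getElem?_iterate _ _ _ _ (Nat.sub_lt i₀.pos one_pos)]
    rw [Option.map_some, Function.comp_apply, ← Function.iterate_succ_apply' σ,
      Nat.succ_eq_add_one, Nat.sub_one_add_one_eq_of_pos i₀.pos,
      (Equiv.Perm.isPeriodicPt_of_forall_sameCycle hσ r).eq]

/-- A word `u` over a finite ordered alphabet is the BWT of some aperiodic necklace iff
its standard permutation is a single cycle of length `|u|` (i.e. some point has full
orbit). -/
theorem stmt17 (k : ℕ) (u : List (Fin k)) (π : Equiv.Perm (Fin u.length))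
    (hπ : ∀ i j : Fin u.length,
      π i < π j ↔ (u.get i < u.get j ∨ (u.get i = u.get j ∧ i < j))) :
    (∃ w : List (Fin k), Primitive w ∧ bwt w = u) ↔
      ∃ i : Fin u.length, ∀ j : Fin u.length, ∃ m : ℕ, (π ^ m) i = j := by
  have hcycle : ∀ i j, (∃ m : ℕ, (π ^ m) i = j) ↔ π.SameCycle i j := fun i j =>
    ⟨fun ⟨m, hm⟩ => ⟨m, by simpa using hm⟩, Equiv.Perm.SameCycle.exists_nat_pow_eq⟩
  simp only [hcycle]
  constructor
  · rintro ⟨w, hw, rfl⟩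
    exact ⟨⟨0, by simpa [length_bwt, length_pos_iff] using hw.1⟩,
      hw.sameCycle_of_isStandardPerm_bwt hπ _⟩
  · rintro ⟨i₀, hi₀⟩
    obtain ⟨w, hw, hbwt⟩ := IsStandardPerm.exists_primitive_bwt_eq hπ hi₀
    exact ⟨w, hw, hbwt.trans (ofFn_get u)⟩
end
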